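/- arXiv:2108.10790 — 5 statements merged into one kernel-verified Lean document; each statement's English description precedes it below -/
import Mathlib

section
/- Let ℒ be a polyline tree bundle over a finite point set P of size n with root p_r, and let G_t be the directed graph whose vertices are the points of P occurring in some polyline of ℒ and whose edges are all ordered pairs (v, w) such that some polyline of ℒ contains the segment from v to w. Then G_t is a directed tree rooted at p_r: every vertex of G_t is reachable from p_r by a unique directed path, every polyline of ℒ is a directed path in G_t starting at p_r, and G_t has at most n − 1 edges. Consequently, any two distinct points lying on a common polyline of ℒ are in ancestor–descendant relation in G_t. -/
/-- A simple polyline over the point set `P`: a list of at least two pairwise distinct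
points of `P`. -/
def IsSimplePolyline {α : Type*} (P : Finset α) (L : List α) : Prop :=
  L.Nodup ∧ 2 ≤ L.length ∧ ∀ x ∈ L, x ∈ P

/-- A polyline tree bundle over `P` with root `pr`: a finite family of simple polylines,
each starting at `pr`, such that the set of points shared by any two of them is exactly
a common prefix of both. -/
def IsPTB {α : Type*} (P : Finset α) (pr : α) (B : Finset (List α)) : Prop :=
  (∀ L ∈ B, IsSimplePolyline P L) ∧
  (∀ L ∈ B, L.head? = some pr) ∧
  (∀ L ∈ B, ∀ L' ∈ B, ∃ i, L.take i = L'.take i ∧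
      ∀ x, (x ∈ L ∧ x ∈ L') ↔ x ∈ L.take i)

/-- The edge set of the tree graph `G_t`: all ordered pairs `(v, w)` such that some
polyline of the bundle contains the segment from `v` to `w`. -/
def treeEdges {α : Type*} (B : Finset (List α)) : Set (α × α) :=
  {e | ∃ L ∈ B, [e.1, e.2] <:+: L}

namespace PTBAux

variable {α : Type*} [DecidableEq α]

lemma take_indexOf_getLast {v : α} {m : List α} (hv : v ∈ m) :
    (m.take (m.idxOf v + 1)).getLast? = some v := by
  have hk : m.idxOf v < m.length := List.idxOf_lt_length_iff.2 hv
  have hlen : (m.take (m.idxOf v + 1)).length = m.idxOf v + 1 := by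
    simp [List.length_take]; omega
  rw [List.getLast?_eq_getElem?, hlen]
  simp [List.getElem?_take, List.getElem?_eq_getElem hk, List.getElem_idxOf hk]

lemma exists_prefix_getLast {v : α} {m : List α} (hv : v ∈ m) :
    ∃ p, p <+: m ∧ p.getLast? = some v :=
  ⟨m.take (m.idxOf v + 1), List.take_prefix _ _, take_indexOf_getLast hv⟩

lemma prefix_getLast_eq {l p1 p2 : List α} {v : α} (hnd : l.Nodup)
    (h1 : p1 <+: l) (h2 : p2 <+: l)
    (g1 : p1.getLast? = some v) (g2 : p2.getLast? = some v) : p1 = p2 := by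
  have key : ∀ q1 q2 : List α, q1 <+: q2 → q2 <+: l → q1.getLast? = some v →
      q2.getLast? = some v → q1 = q2 := by
    intro q1 q2 h12 h2l gg1 gg2
    have hq1 : q1 ≠ [] := by rintro rfl; simp at gg1
    have hq2 : q2 ≠ [] := by rintro rfl; simp at gg2
    have l1 : 0 < q1.length := List.length_pos_iff.2 hq1
    have l2 : 0 < q2.length := List.length_pos_iff.2 hq2
    have h1lt : q1.length - 1 < q1.length := by omega
    have h2lt : q2.length - 1 < q2.length := by omega
    have e1 : q1[q1.length - 1]'h1lt = v := by
      have := List.getLast?_eq_getElem? (l := q1)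
      rw [gg1, List.getElem?_eq_getElem h1lt] at this
      exact (Option.some.injEq _ _ ▸ this).symm
    have e2 : q2[q2.length - 1]'h2lt = v := by
      have := List.getLast?_eq_getElem? (l := q2)
      rw [gg2, List.getElem?_eq_getElem h2lt] at this
      exact (Option.some.injEq _ _ ▸ this).symm
    have hle : q1.length ≤ q2.length := h12.length_le
    have h1lt2 : q1.length - 1 < q2.length := by omega
    have heq : q2[q1.length - 1]'h1lt2 = q2[q2.length - 1]'h2lt := by
      rw [← h12.getElem h1lt, e1, e2]
    have hnd2 : q2.Nodup := hnd.sublist h2l.sublist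
    have := (hnd2.getElem_inj_iff).1 heq
    exact h12.eq_of_length (by omega)
  rcases List.prefix_or_prefix_of_prefix h1 h2 with h | h
  · exact key _ _ h h2 g1 g2
  · exact (key _ _ h h1 g2 g1).symm

lemma no_edge_to_root {P : Finset α} {pr : α} {B : Finset (List α)}
    (hPTB : IsPTB P pr B) (a : α) : (a, pr) ∉ treeEdges B := by
  rintro ⟨L, hL, s, t, hst⟩
  have hnd := (hPTB.1 L hL).1
  have hh := hPTB.2.1 L hL
  cases s with
  | nil =>
    simp only [List.nil_append] at hst
    rw [← hst] at hh hnd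
    simp only [List.cons_append, List.head?_cons, Option.some.injEq] at hh
    subst hh
    simp at hnd
  | cons c s' =>
    have hst' : c :: (s' ++ [(a, pr).1, (a, pr).2] ++ t) = L := by simpa using hst
    rw [← hst'] at hh hnd
    simp only [List.head?_cons, Option.some.injEq] at hh
    rw [List.nodup_cons] at hnd
    apply hnd.1
    rw [hh]
    simp

lemma pred_unique {P : Finset α} {pr : α} {B : Finset (List α)}
    (hPTB : IsPTB P pr B) {a b v : α}
    (ha : (a, v) ∈ treeEdges B) (hb : (b, v) ∈ treeEdges B) : a = b := by
  obtain ⟨L, hL, s, t, hst⟩ := ha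
  obtain ⟨L', hL', s', t', hst'⟩ := hb
  obtain ⟨i, htake, hiff⟩ := hPTB.2.2 L hL L' hL'
  have hndL := (hPTB.1 L hL).1
  have hndL' := (hPTB.1 L' hL').1
  have hvL : v ∈ L := hst ▸ (by simp)
  have hvL' : v ∈ L' := hst' ▸ (by simp)
  have hvtake : v ∈ L.take i := (hiff v).1 ⟨hvL, hvL'⟩
  obtain ⟨q, hq, hqv⟩ := exists_prefix_getLast hvtake
  have hqL : q <+: L := hq.trans (List.take_prefix _ _)
  have hqL' : q <+: L' := by
    rw [htake] at hq
    exact hq.trans (List.take_prefix _ _)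
  have hp1 : (s ++ [a, v]) <+: L := ⟨t, by rw [← hst]⟩
  have hp2 : (s' ++ [b, v]) <+: L' := ⟨t', by rw [← hst']⟩
  have g1 : (s ++ [a, v]).getLast? = some v := by
    rw [show s ++ [a, v] = (s ++ [a]) ++ [v] by simp]
    exact List.getLast?_concat
  have g2 : (s' ++ [b, v]).getLast? = some v := by
    rw [show s' ++ [b, v] = (s' ++ [b]) ++ [v] by simp]
    exact List.getLast?_concat
  have e1 : s ++ [a, v] = q := prefix_getLast_eq hndL hp1 hqL g1 hqv
  have e2 : s' ++ [b, v] = q := prefix_getLast_eq hndL' hp2 hqL' g2 hqv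
  have e3 : s ++ [a, v] = s' ++ [b, v] := e1.trans e2.symm
  have d : ((s ++ [a]) ++ [v]).dropLast = ((s' ++ [b]) ++ [v]).dropLast := by
    simpa using congrArg List.dropLast e3
  rw [List.dropLast_concat, List.dropLast_concat] at d
  have := congrArg List.getLast? d
  rw [List.getLast?_concat, List.getLast?_concat] at this
  exact Option.some_injective _ this

lemma polyline_chain {B : Finset (List α)} {L : List α} (hL : L ∈ B) :
    L.Chain' (fun a b => (a, b) ∈ treeEdges B) := by
  unfold List.Chain'
  rw [List.isChain_iff_getElem]
  intro i hlt
  have h1 : i < L.length := by omega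
  have h2 : i + 1 < L.length := by omega
  refine ⟨L, hL, L.take i, L.drop (i + 2), ?_⟩
  have k1 : L.drop i = L[i] :: L.drop (i + 1) := (List.getElem_cons_drop h1).symm
  have k2 : L.drop (i + 1) = L[i + 1] :: L.drop (i + 1 + 1) :=
    (List.getElem_cons_drop h2).symm
  have key : [L[i], L[i + 1]] ++ L.drop (i + 2) = L.drop i := by
    rw [k1, k2]
    rfl
  calc L.take i ++ [L[i], L[i + 1]] ++ L.drop (i + 2)
      = L.take i ++ ([L[i], L[i + 1]] ++ L.drop (i + 2)) := by rw [List.append_assoc]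
    _ = L.take i ++ L.drop i := by rw [key]
    _ = L := List.take_append_drop i L

lemma chain'_rtg_aux {R : α → α → Prop} {l : List α} (h : l.Chain' R) :
    ∀ d i (hd : i + d < l.length),
      Relation.ReflTransGen R (l[i]'(by omega)) (l[i + d]'hd) := by
  intro d
  induction d with
  | zero => intro i hd; exact Relation.ReflTransGen.refl
  | succ d ih =>
    intro i hd
    have h1 : i + d < l.length := by omega
    have step : R (l[i + d]'h1) (l[i + d + 1]'(by omega)) := by
      have := List.isChain_iff_getElem.1 h (i + d) (by omega)
      simpa using this
    exact (ih i h1).tail step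

lemma chain'_rtg {R : α → α → Prop} {l : List α} (h : l.Chain' R) {i j : ℕ}
    (hij : i ≤ j) (hj : j < l.length) :
    Relation.ReflTransGen R (l[i]'(by omega)) (l[j]'hj) := by
  obtain ⟨d, rfl⟩ := Nat.exists_eq_add_of_le hij
  exact chain'_rtg_aux h d i hj

lemma prefix_head?_eq {p l : List α} (h : p <+: l) (hp : p ≠ []) : p.head? = l.head? := by
  obtain ⟨r, rfl⟩ := h
  rw [List.head?_append]
  cases p with
  | nil => simp at hp
  | cons a t => simp

lemma decompose {pr v : α} {R : α → α → Prop} {r : List α}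
    (hh : r.head? = some pr) (hl : r.getLast? = some v) (hc : r.Chain' R) :
    r = [v] ∧ v = pr ∨
      ∃ r' u, r' ≠ [] ∧ r = r' ++ [v] ∧ r'.head? = some pr ∧
        r'.getLast? = some u ∧ r'.Chain' R ∧ R u v := by
  have hne : r ≠ [] := by rintro rfl; simp at hh
  have hlast : r.getLast hne = v := by
    have := List.getLast?_eq_getLast hne
    rw [hl] at this
    exact (Option.some_injective _ this).symm
  have hdec : r.dropLast ++ [v] = r := by rw [← hlast]; exact List.dropLast_append_getLast hne
  rcases eq_or_ne r.dropLast [] with hd | hd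
  · left
    rw [hd] at hdec
    constructor
    · exact hdec.symm
    · rw [← hdec] at hh; simpa using hh
  · right
    have hrne : r.dropLast ≠ [] := hd
    have hc' : (r.dropLast ++ [v]).Chain' R := by rw [hdec]; exact hc
    unfold List.Chain' at hc'
    rw [List.isChain_append] at hc'
    obtain ⟨hc1, _, hrel⟩ := hc'
    have hu : r.dropLast.getLast? = some (r.dropLast.getLast hrne) :=
      List.getLast?_eq_getLast hrne
    refine ⟨r.dropLast, r.dropLast.getLast hrne, hrne, hdec.symm, ?_, hu, hc1, ?_⟩
    · rw [prefix_head?_eq ⟨[v], hdec⟩ hrne]; exact hh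
    · exact hrel _ hu _ (by simp)

lemma path_unique {P : Finset α} {pr : α} {B : Finset (List α)} (hPTB : IsPTB P pr B) :
    ∀ n (p q : List α) (v : α), p.length + q.length ≤ n →
      p.head? = some pr → p.getLast? = some v →
      p.Chain' (fun a b => (a, b) ∈ treeEdges B) →
      q.head? = some pr → q.getLast? = some v →
      q.Chain' (fun a b => (a, b) ∈ treeEdges B) →
      p = q := by
  intro n
  induction n with
  | zero =>
    intro p q v hlen hph _ _ _ _ _
    have : p ≠ [] := by rintro rfl; simp at hph
    have := List.length_pos_iff.2 this
    omega
  | succ n ih =>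
    intro p q v hlen hph hpl hpc hqh hql hqc
    rcases decompose hph hpl hpc with ⟨rfl, rfl⟩ | ⟨p', u, hp'ne, rfl, hp'h, hp'l, hp'c, hpe⟩
    · rcases decompose hqh hql hqc with ⟨rfl, _⟩ | ⟨q', w, _, rfl, _, _, _, hqe⟩
      · rfl
      · exact absurd hqe (no_edge_to_root hPTB w)
    · rcases decompose hqh hql hqc with ⟨rfl, rfl⟩ | ⟨q', w, hq'ne, rfl, hq'h, hq'l, hq'c, hqe⟩
      · exact absurd hpe (no_edge_to_root hPTB u)
      · have huw : u = w := pred_unique hPTB hpe hqe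
        subst huw
        have hlen' : p'.length + q'.length ≤ n := by
          simp only [List.length_append, List.length_cons, List.length_nil] at hlen
          omega
        rw [ih p' q' u hlen' hp'h hp'l hp'c hq'h hq'l hq'c]

end PTBAux

open PTBAux
/-- Lemma 1 (combinatorial content): the tree graph of a polyline tree bundle is a directed
tree rooted at `pr`: every vertex (point occurring on some polyline) is reachable from `pr`
by a unique directed path, every polyline is a directed path in `G_t` starting at `pr`, and
`G_t` has at most `n - 1` edges.  Consequently any two distinct points on a common polyline
are in ancestor–descendant relation in `G_t`. -/
theorem ptb_tree_graph {α : Type*} [DecidableEq α]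
    (P : Finset α) (pr : α) (B : Finset (List α))
    (hPTB : IsPTB P pr B) :
    (∀ v, (∃ L ∈ B, v ∈ L) →
        ∃! p : List α, p.head? = some pr ∧ p.getLast? = some v ∧
          p.Chain' (fun a b => (a, b) ∈ treeEdges B)) ∧
    (∀ L ∈ B, L.Chain' (fun a b => (a, b) ∈ treeEdges B)) ∧
    (treeEdges B).ncard ≤ P.card - 1 ∧
    (∀ L ∈ B, ∀ x ∈ L, ∀ y ∈ L, x ≠ y →
        Relation.ReflTransGen (fun a b => (a, b) ∈ treeEdges B) x y ∨
        Relation.ReflTransGen (fun a b => (a, b) ∈ treeEdges B) y x) := by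
  refine ⟨?_, fun L hL => polyline_chain hL, ?_, ?_⟩
  · -- unique paths
    rintro v ⟨L, hL, hv⟩
    set p := L.take (L.idxOf v + 1) with hp
    have hpne : p ≠ [] := by
      intro h
      rw [hp, List.take_eq_nil_iff] at h
      rcases h with h | h
      · exact absurd h (by omega)
      · rw [h] at hv; simp at hv
    have hph : p.head? = some pr := by
      rw [prefix_head?_eq (List.take_prefix _ _) hpne]
      exact hPTB.2.1 L hL
    have hpl : p.getLast? = some v := take_indexOf_getLast hv
    have hpc : p.Chain' (fun a b => (a, b) ∈ treeEdges B) :=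
      (polyline_chain hL).prefix (List.take_prefix _ _)
    refine ⟨p, ⟨hph, hpl, hpc⟩, ?_⟩
    rintro q ⟨hqh, hql, hqc⟩
    exact path_unique hPTB (q.length + p.length) q p v le_rfl hqh hql hqc hph hpl hpc
  · -- edge count
    rcases Set.eq_empty_or_nonempty (treeEdges B) with he | ⟨e₀, he₀⟩
    · simp [he]
    · have hpr : pr ∈ P := by
        obtain ⟨L, hL, _⟩ := he₀
        have hh := hPTB.2.1 L hL
        cases L with
        | nil => simp at hh
        | cons c L' =>
          simp only [List.head?_cons, Option.some.injEq] at hh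
          subst hh
          exact (hPTB.1 _ hL).2.2 _ (by simp)
      have hmap : ∀ e ∈ treeEdges B, Prod.snd e ∈ (↑(P.erase pr) : Set α) := by
        rintro ⟨a, b⟩ he
        obtain ⟨L, hL, s, t, hst⟩ := he
        simp only [Finset.coe_erase, Set.mem_diff, Finset.mem_coe, Set.mem_singleton_iff]
        constructor
        · have : b ∈ L := by rw [← hst]; simp
          exact (hPTB.1 L hL).2.2 _ this
        · intro hb
          subst hb
          exact no_edge_to_root hPTB a ⟨L, hL, s, t, hst⟩
      have hinj : Set.InjOn Prod.snd (treeEdges B) := by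
        rintro ⟨a, b⟩ ha ⟨c, d⟩ hc h
        simp only at h
        subst h
        rw [pred_unique hPTB ha hc]
      have := Set.ncard_le_ncard_of_injOn Prod.snd hmap hinj (Finset.finite_toSet _)
      rw [Set.ncard_coe_finset, Finset.card_erase_of_mem hpr] at this
      exact this
  · -- comparability
    intro L hL x hx y hy hxy
    have hc := polyline_chain hL (B := B)
    have hi : L.idxOf x < L.length := List.idxOf_lt_length_iff.2 hx
    have hj : L.idxOf y < L.length := List.idxOf_lt_length_iff.2 hy
    have hgx : L[L.idxOf x] = x := List.getElem_idxOf hi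
    have hgy : L[L.idxOf y] = y := List.getElem_idxOf hj
    have hij : L.idxOf x ≠ L.idxOf y := by
      intro h
      apply hxy
      rw [← hgx, ← hgy]
      congr 1
    rcases lt_or_gt_of_ne hij with h | h
    · left
      have key := chain'_rtg hc (le_of_lt h) hj
      rwa [hgx, hgy] at key
    · right
      have key := chain'_rtg hc (le_of_lt h) hi
      rwa [hgx, hgy] at key
end

section
/- If S is a feasible simplification of Sub(r) and v ∈ S, then S ∩ Sub(v) is a feasible simplification of Sub(v). -/
/-- `u` is a child of `w` in the rooted tree given by the parent function. -/
def ChildRel {V : Type*} (parent : V → Option V) (w u : V) : Prop :=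
  parent u = some w

/-- `w` is a (weak) descendant of `v`. -/
def Descend {V : Type*} (parent : V → Option V) (v w : V) : Prop :=
  Relation.ReflTransGen (ChildRel parent) v w

/-- `w` is a strict descendant of `v`. -/
def StrictDescend {V : Type*} (parent : V → Option V) (v w : V) : Prop :=
  Relation.TransGen (ChildRel parent) v w

/-- The vertex set `SubTree(v)` of the subtree rooted at `v`. -/
def SubTree {V : Type*} (parent : V → Option V) (v : V) : Set V :=
  {w | Descend parent v w}

/-- A leaf is a vertex with no children. -/
def IsLeaf {V : Type*} (parent : V → Option V) (v : V) : Prop :=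
  ∀ u, parent u ≠ some v

/-- `T` is a finite rooted tree with root `r`: the root has no parent and every vertex is
a descendant of the root. -/
def IsRootedTree {V : Type*} (parent : V → Option V) (r : V) : Prop :=
  parent r = none ∧ ∀ v, Descend parent r v

/-- `x` lies on the tree path from `v` down to `u`. -/
def OnPath {V : Type*} (parent : V → Option V) (v u x : V) : Prop :=
  Descend parent v x ∧ Descend parent x u

/-- `a` and `b` are consecutive elements of `S` along the tree path from `v` to `u`. -/
def Consecutive {V : Type*} (parent : V → Option V) (S : Set V) (v u a b : V) : Prop :=
  a ∈ S ∧ b ∈ S ∧ OnPath parent v u a ∧ OnPath parent v u b ∧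
    StrictDescend parent a b ∧
    ¬ ∃ c ∈ S, OnPath parent v u c ∧ StrictDescend parent a c ∧ StrictDescend parent c b

/-- `S ⊆ SubTree(v)` is a feasible simplification of `SubTree(v)`: it contains `v` and every leaf
of `SubTree(v)`, and for every leaf `u` of `SubTree(v)` every pair of consecutive elements of `S`
along the tree path from `v` to `u` is a shortcut of `Es`. -/
def Feasible {V : Type*} (parent : V → Option V) (Es : V → V → Prop) (v : V)
    (S : Set V) : Prop :=
  S ⊆ SubTree parent v ∧ v ∈ S ∧
  (∀ u ∈ SubTree parent v, IsLeaf parent u → u ∈ S) ∧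
  (∀ u ∈ SubTree parent v, IsLeaf parent u →
    ∀ a b, Consecutive parent S v u a b → Es a b)

/-- `s(v)`: the minimum cardinality of a feasible simplification of `SubTree(v)`. -/
noncomputable def sVal {V : Type*} (parent : V → Option V) (Es : V → V → Prop)
    (v : V) : ℕ :=
  sInf {k | ∃ S : Set V, Feasible parent Es v S ∧ S.ncard = k}

/-- The set `N(w)` of children of `w`. -/
def childrenOf {V : Type*} [Fintype V] [DecidableEq V] (parent : V → Option V)
    (w : V) : Finset V :=
  Finset.univ.filter (fun u => parent u = some w)

theorem Consecutive.of_inter_subTree {V : Type*} {parent : V → Option V} {S : Set V}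
    {r v u a b : V} (hrv : Descend parent r v)
    (h : Consecutive parent (S ∩ SubTree parent v) v u a b) : Consecutive parent S r u a b := by
  obtain ⟨haS, hbS, ⟨hva, hau⟩, ⟨-, hbu⟩, hab, hbetween⟩ := h
  refine ⟨haS.1, hbS.1, ⟨hrv.trans hva, hau⟩, ⟨hrv.trans hbS.2, hbu⟩, hab, ?_⟩
  rintro ⟨c, hcS, ⟨-, hcu⟩, hac, hcb⟩
  have hvc : Descend parent v c := hva.trans hac.to_reflTransGen
  exact hbetween ⟨c, ⟨hcS, hvc⟩, ⟨hvc, hcu⟩, hac, hcb⟩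

theorem feasible_inter_subtree_general {V : Type*}
    (parent : V → Option V) (r : V) (Es : V → V → Prop)
    (S : Set V) (hS : Feasible parent Es r S) (v : V) (hv : v ∈ S) :
    Feasible parent Es v (S ∩ SubTree parent v) := by
  obtain ⟨hSsub, -, hleaf, hcons⟩ := hS
  have hrv : Descend parent r v := hSsub hv
  refine ⟨Set.inter_subset_right, ⟨hv, .refl⟩, fun u hu hl => ⟨hleaf u (hrv.trans hu) hl, hu⟩, ?_⟩
  exact fun u hu hl a b hab => hcons u (hrv.trans hu) hl a b (hab.of_inter_subTree hrv)

/-- Optimal substructure: if `S` is a feasible simplification of `Sub(r)` and `v ∈ S`,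
then `S ∩ Sub(v)` is a feasible simplification of `Sub(v)`. -/
theorem feasible_inter_subtree {V : Type*} [Fintype V] [DecidableEq V]
    (parent : V → Option V) (r : V) (Es : V → V → Prop)
    (htree : IsRootedTree parent r)
    (hEsDesc : ∀ a b, Es a b → StrictDescend parent a b)
    (hEsParent : ∀ w u, parent u = some w → Es w u)
    (S : Set V) (hS : Feasible parent Es r S) (v : V) (hv : v ∈ S) :
    Feasible parent Es v (S ∩ SubTree parent v) :=
  feasible_inter_subtree_general parent r Es S hS v hv
end

section
/- For every non-leaf vertex v of T: s(v) = 1 + min over all sets C ⊆ Sub(v) \ {v} such that (i) (v, w) ∈ E_s for every w ∈ C, (ii) no element of C is a strict descendant of another element of C, and (iii) every path in T from v to a leaf of Sub(v) contains an element of C, of the sum Σ_{w ∈ C} s(w). -/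
namespace PTBS

variable {V : Type*} {parent : V → Option V} {Es : V → V → Prop} {r : V}

lemma noLoop (htree : IsRootedTree parent r) : ∀ v, ¬ StrictDescend parent v v := by
  intro v
  have hv := htree.2 v
  induction hv with
  | refl =>
    intro h
    obtain ⟨d, _, hd⟩ := Relation.TransGen.tail'_iff.mp h
    rw [ChildRel, htree.1] at hd
    exact nomatch hd
  | @tail b c hrb hbc ih =>
    intro h
    obtain ⟨d, hd1, hd2⟩ := Relation.TransGen.tail'_iff.mp h
    rw [ChildRel] at hd2
    rw [ChildRel] at hbc
    rw [hbc] at hd2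
    obtain rfl : d = b := by injection hd2 with h2; exact h2.symm
    exact ih (Relation.TransGen.head' hbc hd1)

lemma strict_of_ne {a b : V} (h : Descend parent a b) (hne : a ≠ b) :
    StrictDescend parent a b :=
  (Relation.reflTransGen_iff_eq_or_transGen.mp h).resolve_left (fun e => hne e.symm)

lemma antisymm (hno : ∀ x, ¬ StrictDescend parent x x) {a b : V}
    (h1 : Descend parent a b) (h2 : Descend parent b a) : a = b := by
  by_contra hne
  exact hno a ((strict_of_ne h1 hne).trans_left h2)

lemma ne_of_strict (hno : ∀ x, ¬ StrictDescend parent x x) {a b : V}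
    (h : StrictDescend parent a b) : a ≠ b := by
  rintro rfl; exact hno a h

lemma comparable {a b u : V} (ha : Descend parent a u) (hb : Descend parent b u) :
    Descend parent a b ∨ Descend parent b a := by
  induction ha with
  | refl => right; exact hb
  | @tail c u' hac hcu ih =>
    rcases Relation.ReflTransGen.cases_tail hb with rfl | ⟨c', hbc', hc'u⟩
    · left; exact hac.tail hcu
    · rw [ChildRel] at hcu hc'u
      rw [hcu] at hc'u
      obtain rfl : c' = c := by injection hc'u with h2; exact h2.symm
      exact ih hbc'

lemma wf_strict [Finite V] (hno : ∀ x, ¬ StrictDescend parent x x) :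
    WellFounded (StrictDescend parent) := by
  haveI : IsTrans V (StrictDescend parent) := ⟨fun _ _ _ h1 h2 => h1.trans h2⟩
  haveI : IsIrrefl V (StrictDescend parent) := ⟨hno⟩
  exact Finite.wellFounded_of_trans_of_irrefl _

lemma wf_strict_flip [Finite V] (hno : ∀ x, ¬ StrictDescend parent x x) :
    WellFounded (fun a b => StrictDescend parent b a) := by
  haveI : IsTrans V (fun a b => StrictDescend parent b a) := ⟨fun _ _ _ h1 h2 => h2.trans h1⟩
  haveI : IsIrrefl V (fun a b => StrictDescend parent b a) := ⟨hno⟩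
  exact Finite.wellFounded_of_trans_of_irrefl _

lemma exists_leaf [Finite V] (hno : ∀ x, ¬ StrictDescend parent x x) (w : V) :
    ∃ u, Descend parent w u ∧ IsLeaf parent u := by
  obtain ⟨u, hu, hmin⟩ := (wf_strict_flip hno).has_min (SubTree parent w)
    ⟨w, Relation.ReflTransGen.refl⟩
  refine ⟨u, hu, fun c hc => ?_⟩
  exact hmin c (hu.tail hc) (Relation.TransGen.single hc)

end PTBS

namespace PTBS
variable {V : Type*} {parent : V → Option V} {Es : V → V → Prop} {r : V}

lemma feasible_subtree (hEsParent : ∀ w u, parent u = some w → Es w u) (w : V) :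
    Feasible parent Es w (SubTree parent w) := by
  refine ⟨le_refl _, Relation.ReflTransGen.refl, fun u _ _ => ?_, fun u hu hul a b hc => ?_⟩
  · exact ‹u ∈ SubTree parent w›
  · obtain ⟨haS, hbS, hpa, hpb, hab, hnc⟩ := hc
    obtain ⟨c0, h1, h2⟩ := Relation.TransGen.head'_iff.mp hab
    rcases Relation.reflTransGen_iff_eq_or_transGen.mp h2 with rfl | hc0b
    · exact hEsParent a b h1
    · exact absurd ⟨c0, haS.tail h1, ⟨haS.tail h1, h2.trans hpb.2⟩,
        Relation.TransGen.single h1, hc0b⟩ hnc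

lemma sVal_le {v : V} {S : Set V} (h : Feasible parent Es v S) :
    sVal parent Es v ≤ S.ncard :=
  Nat.sInf_le ⟨S, h, rfl⟩

lemma sVal_attained (hEsParent : ∀ w u, parent u = some w → Es w u) (v : V) :
    ∃ S, Feasible parent Es v S ∧ S.ncard = sVal parent Es v := by
  have hne : {k | ∃ S : Set V, Feasible parent Es v S ∧ S.ncard = k}.Nonempty :=
    ⟨(SubTree parent v).ncard, SubTree parent v, feasible_subtree hEsParent v, rfl⟩
  exact Nat.sInf_mem hne

end PTBS

/-- The dynamic-programming recursion: for every non-leaf vertex `v`,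
`s(v) = 1 + min over all cover-node selections `C ⊆ Sub(v) \ {v}` (each an endpoint of a
shortcut from `v`, pairwise not in strict-descendant relation, and hitting every path from
`v` to a leaf of `Sub(v)`) of `Σ_{w ∈ C} s(w)`. -/
theorem sVal_recursion {V : Type*} [Fintype V] [DecidableEq V]
    (parent : V → Option V) (r : V) (Es : V → V → Prop)
    (htree : IsRootedTree parent r)
    (hEsDesc : ∀ a b, Es a b → StrictDescend parent a b)
    (hEsParent : ∀ w u, parent u = some w → Es w u)
    (v : V) (hv : ¬ IsLeaf parent v) :
    sVal parent Es v = 1 + sInf {k | ∃ C : Finset V,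
      (↑C ⊆ SubTree parent v \ {v}) ∧
      (∀ w ∈ C, Es v w) ∧
      (∀ w ∈ C, ∀ w' ∈ C, w ≠ w' → ¬ StrictDescend parent w w') ∧
      (∀ u ∈ SubTree parent v, IsLeaf parent u → ∃ w ∈ C, OnPath parent v u w) ∧
      k = ∑ w ∈ C, sVal parent Es w} := by
  classical
  have hno : ∀ x, ¬ StrictDescend parent x x := PTBS.noLoop htree
  set RHS : Set ℕ := {k | ∃ C : Finset V,
      (↑C ⊆ SubTree parent v \ {v}) ∧
      (∀ w ∈ C, Es v w) ∧
      (∀ w ∈ C, ∀ w' ∈ C, w ≠ w' → ¬ StrictDescend parent w w') ∧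
      (∀ u ∈ SubTree parent v, IsLeaf parent u → ∃ w ∈ C, OnPath parent v u w) ∧
      k = ∑ w ∈ C, sVal parent Es w} with hRHSdef
  -- Part A : for every valid selection, sVal v ≤ 1 + sum
  have partA : ∀ k ∈ RHS, sVal parent Es v ≤ 1 + k := by
    rintro k ⟨C, hC1, hC2, hC3, hC4, rfl⟩
    choose F hF hFc using fun w => PTBS.sVal_attained (parent := parent) (Es := Es) hEsParent w
    set S : Set V := {v} ∪ ⋃ w ∈ C, F w with hSdef
    have hmemS : ∀ x, x ∈ S ↔ x = v ∨ ∃ w ∈ C, x ∈ F w := by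
      intro x; simp [hSdef]
    have hFsub : ∀ w, F w ⊆ SubTree parent w := fun w => (hF w).1
    have hCsub : ∀ w ∈ C, Descend parent v w ∧ w ≠ v := by
      intro w hw
      obtain ⟨h1, h2⟩ := hC1 hw
      exact ⟨h1, h2⟩
    have hSsub : S ⊆ SubTree parent v := by
      intro x hx
      rcases (hmemS x).mp hx with rfl | ⟨w, hw, hxw⟩
      · exact Relation.ReflTransGen.refl
      · exact ((hCsub w hw).1).trans (hFsub w hxw)
    have hfeas : Feasible parent Es v S := by
      refine ⟨hSsub, (hmemS v).mpr (Or.inl rfl), ?_, ?_⟩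
      · intro u hu hul
        obtain ⟨w, hw, hwp⟩ := hC4 u hu hul
        exact (hmemS u).mpr (Or.inr ⟨w, hw, (hF w).2.2.1 u hwp.2 hul⟩)
      · intro u hu hul a b hcons
        obtain ⟨haS, hbS, hpa, hpb, hab, hnc⟩ := hcons
        obtain ⟨w, hw, hwp⟩ := hC4 u hu hul
        have hwS : w ∈ S := (hmemS w).mpr (Or.inr ⟨w, hw, (hF w).2.1⟩)
        have hbne : b ≠ v := by
          rintro rfl
          exact hno a (hab.trans_left hpa.1)
        obtain ⟨w2, hw2, hbw2⟩ := ((hmemS b).mp hbS).resolve_left hbne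
        have hw2b : Descend parent w2 b := hFsub w2 hbw2
        by_cases hav : a = v
        · subst hav
          have hbw : Descend parent b w := by
            rcases PTBS.comparable hpb.2 hwp.2 with h | h
            · exact h
            · rcases Relation.reflTransGen_iff_eq_or_transGen.mp h with rfl | hstr
              · exact Relation.ReflTransGen.refl
              · exact absurd ⟨w, hwS, hwp,
                  PTBS.strict_of_ne hwp.1 (fun e => (hCsub w hw).2 e.symm), hstr⟩ hnc
          obtain rfl : w2 = w := by
            by_contra hne
            exact hC3 w2 hw2 w hw hne (PTBS.strict_of_ne (hw2b.trans hbw) hne)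
          obtain rfl : b = w2 := PTBS.antisymm hno hbw hw2b
          exact hC2 _ hw2
        · obtain ⟨w1, hw1, haw1⟩ := ((hmemS a).mp haS).resolve_left hav
          have hw1a : Descend parent w1 a := hFsub w1 haw1
          have hw1b : Descend parent w1 b := hw1a.trans hab.to_reflTransGen
          obtain rfl : w2 = w1 := by
            by_contra hne
            rcases PTBS.comparable hw1b hw2b with h | h
            · exact hC3 w1 hw1 w2 hw2 (Ne.symm hne) (PTBS.strict_of_ne h (Ne.symm hne))
            · exact hC3 w2 hw2 w1 hw1 hne (PTBS.strict_of_ne h hne)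
          have huw1 : u ∈ SubTree parent w2 := hw1a.trans hpa.2
          refine (hF w2).2.2.2 u huw1 hul a b
            ⟨haw1, hbw2, ⟨hw1a, hpa.2⟩, ⟨hw1b, hpb.2⟩, hab, ?_⟩
          rintro ⟨c, hcF, hcp, hac, hcb⟩
          exact hnc ⟨c, (hmemS c).mpr (Or.inr ⟨w2, hw1, hcF⟩),
            ⟨((hCsub w2 hw1).1).trans hcp.1, hcp.2⟩, hac, hcb⟩
    have hcard : S.ncard ≤ 1 + ∑ w ∈ C, sVal parent Es w := by
      have hU : (⋃ w ∈ C, (F w : Set V))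
          = ↑(C.biUnion (fun w => (F w).toFinite.toFinset)) := by
        simp only [Finset.coe_biUnion, Set.Finite.coe_toFinset]
        rfl
      calc S.ncard ≤ ({v} : Set V).ncard + (⋃ w ∈ C, F w).ncard := Set.ncard_union_le _ _
        _ = 1 + (⋃ w ∈ C, F w).ncard := by rw [Set.ncard_singleton]
        _ ≤ 1 + ∑ w ∈ C, sVal parent Es w := by
            rw [hU, Set.ncard_coe_finset]
            have h1 : (C.biUnion fun w => (F w).toFinite.toFinset).card
                ≤ ∑ w ∈ C, ((F w).toFinite.toFinset).card := Finset.card_biUnion_le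
            have h2 : ∑ w ∈ C, ((F w).toFinite.toFinset).card
                = ∑ w ∈ C, sVal parent Es w :=
              Finset.sum_congr rfl (fun w _ => by
                rw [← Set.ncard_eq_toFinset_card _ ((F w).toFinite)]; exact hFc w)
            omega
    exact le_trans (PTBS.sVal_le hfeas) hcard
  -- Part B : there is a valid selection achieving 1 + sum ≤ sVal v
  have partB : ∃ k ∈ RHS, 1 + k ≤ sVal parent Es v := by
    obtain ⟨S, hS, hScard⟩ := PTBS.sVal_attained (parent := parent) (Es := Es) hEsParent v
    set Cs : Set V := {w | w ∈ S ∧ w ≠ v ∧ ∀ c ∈ S, c ≠ v → ¬ StrictDescend parent c w}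
      with hCsdef
    set C : Finset V := Cs.toFinite.toFinset with hCdef
    have hmemC : ∀ w, w ∈ C ↔ w ∈ S ∧ w ≠ v ∧
        (∀ c ∈ S, c ≠ v → ¬ StrictDescend parent c w) := by
      intro w; rw [hCdef, Set.Finite.mem_toFinset]; rfl
    have hC1 : ↑C ⊆ SubTree parent v \ {v} := by
      intro w hw
      obtain ⟨h1, h2, _⟩ := (hmemC w).mp hw
      exact ⟨hS.1 h1, h2⟩
    have hC2 : ∀ w ∈ C, Es v w := by
      intro w hw
      obtain ⟨hwS, hwv, hmin⟩ := (hmemC w).mp hw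
      obtain ⟨u, hwu, hul⟩ := PTBS.exists_leaf hno w
      have hvw : Descend parent v w := hS.1 hwS
      refine hS.2.2.2 u (hvw.trans hwu) hul v w
        ⟨hS.2.1, hwS, ⟨Relation.ReflTransGen.refl, hvw.trans hwu⟩,
        ⟨hvw, hwu⟩, PTBS.strict_of_ne hvw (Ne.symm hwv), ?_⟩
      rintro ⟨c, hcS, hcp, hvc, hcw⟩
      exact hmin c hcS (Ne.symm (PTBS.ne_of_strict hno hvc)) hcw
    have hC3 : ∀ w ∈ C, ∀ w' ∈ C, w ≠ w' → ¬ StrictDescend parent w w' := by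
      intro w hw w' hw' hne hstr
      obtain ⟨hwS, hwv, _⟩ := (hmemC w).mp hw
      exact ((hmemC w').mp hw').2.2 w hwS hwv hstr
    have hC4 : ∀ u ∈ SubTree parent v, IsLeaf parent u → ∃ w ∈ C, OnPath parent v u w := by
      intro u hu hul
      have huS : u ∈ S := hS.2.2.1 u hu hul
      have hunv : u ≠ v := by rintro rfl; exact hv hul
      obtain ⟨w, hwA, hwmin⟩ := (PTBS.wf_strict hno).has_min
        {x | x ∈ S ∧ x ≠ v ∧ Descend parent x u} ⟨u, huS, hunv, Relation.ReflTransGen.refl⟩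
      obtain ⟨hwS, hwv, hwu⟩ := hwA
      refine ⟨w, (hmemC w).mpr ⟨hwS, hwv, ?_⟩, hS.1 hwS, hwu⟩
      intro c hcS hcv hcw
      exact hwmin c ⟨hcS, hcv, hcw.to_reflTransGen.trans hwu⟩ hcw
    have hfeasw : ∀ w ∈ C, Feasible parent Es w (S ∩ SubTree parent w) := by
      intro w hw
      obtain ⟨hwS, hwv, _⟩ := (hmemC w).mp hw
      have hvw : Descend parent v w := hS.1 hwS
      refine ⟨Set.inter_subset_right, ⟨hwS, Relation.ReflTransGen.refl⟩, ?_, ?_⟩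
      · intro u hu hul
        exact ⟨hS.2.2.1 u (hvw.trans hu) hul, hu⟩
      · intro u hu hul a b hcons
        obtain ⟨haS, hbS, hpa, hpb, hab, hnc⟩ := hcons
        refine hS.2.2.2 u (hvw.trans hu) hul a b ⟨haS.1, hbS.1,
          ⟨hvw.trans hpa.1, hpa.2⟩, ⟨hvw.trans hpb.1, hpb.2⟩, hab, ?_⟩
        rintro ⟨c, hcS, hcp, hac, hcb⟩
        exact hnc ⟨c, ⟨hcS, haS.2.trans hac.to_reflTransGen⟩,
          ⟨haS.2.trans hac.to_reflTransGen, hcp.2⟩, hac, hcb⟩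
    have hsum : ∑ w ∈ C, sVal parent Es w + 1 ≤ S.ncard := by
      set F : V → Finset V := fun w => (S ∩ SubTree parent w).toFinite.toFinset with hFd
      have hFcard : ∀ w, (F w).card = (S ∩ SubTree parent w).ncard := fun w =>
        (Set.ncard_eq_toFinset_card _ _).symm
      have hdisj : ∀ x ∈ C, ∀ y ∈ C, x ≠ y → Disjoint (F x) (F y) := by
        intro x hx y hy hne
        rw [Finset.disjoint_left]
        intro a hax hay
        rw [hFd] at hax hay
        simp only [Set.Finite.mem_toFinset, Set.mem_inter_iff] at hax hay
        rcases PTBS.comparable hax.2 hay.2 with h | h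
        · exact hC3 x hx y hy hne (PTBS.strict_of_ne h hne)
        · exact hC3 y hy x hx (Ne.symm hne) (PTBS.strict_of_ne h (Ne.symm hne))
      have hUsub : C.biUnion F ⊆ (S \ {v}).toFinite.toFinset := by
        intro a ha
        rw [Finset.mem_biUnion] at ha
        obtain ⟨w, hw, haw⟩ := ha
        rw [hFd] at haw
        simp only [Set.Finite.mem_toFinset, Set.mem_inter_iff] at haw
        rw [Set.Finite.mem_toFinset]
        refine ⟨haw.1, ?_⟩
        simp only [Set.mem_singleton_iff]
        rintro rfl
        obtain ⟨hwS, hwv, _⟩ := (hmemC w).mp hw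
        exact hwv (PTBS.antisymm hno (hS.1 hwS) haw.2).symm
      have h1 : ∑ w ∈ C, sVal parent Es w ≤ ∑ w ∈ C, (F w).card := by
        refine Finset.sum_le_sum ?_
        intro w hw
        rw [hFcard]
        exact PTBS.sVal_le (hfeasw w hw)
      have h2 : (C.biUnion F).card = ∑ w ∈ C, (F w).card := Finset.card_biUnion hdisj
      have h3 : (C.biUnion F).card ≤ ((S \ {v}).toFinite.toFinset).card :=
        Finset.card_le_card hUsub
      have h4 : ((S \ {v}).toFinite.toFinset).card = (S \ {v}).ncard :=
        (Set.ncard_eq_toFinset_card _ _).symm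
      have h5 : (S \ {v}).ncard + 1 = S.ncard :=
        Set.ncard_diff_singleton_add_one hS.2.1
      omega
    refine ⟨∑ w ∈ C, sVal parent Es w, ⟨C, hC1, hC2, hC3, hC4, rfl⟩, ?_⟩
    omega
  obtain ⟨k0, hk0, hk0le⟩ := partB
  have hRne : RHS.Nonempty := ⟨k0, hk0⟩
  have h1 : sVal parent Es v ≤ 1 + sInf RHS := partA _ (Nat.sInf_mem hRne)
  have h2 : 1 + sInf RHS ≤ sVal parent Es v :=
    le_trans (by have := Nat.sInf_le hk0; omega) hk0le
  exact le_antisymm h1 h2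
end

section
/- Fix a non-leaf vertex v of T and define h : Sub(v) \ {v} → ℕ ∪ {∞} bottom-up by: for a leaf w, h(w) = s(w) if (v, w) ∈ E_s and h(w) = ∞ otherwise; for a non-leaf w, h(w) = min( s(w) if (v, w) ∈ E_s else ∞ , Σ_{u ∈ N(w)} h(u) ). Then s(v) = 1 + Σ_{u ∈ N(v)} h(u), and this value is finite. -/
section Infra
variable {V : Type*} (parent : V → Option V) {r : V}

lemma strict_of_descend_ne {a b : V} (h : Descend parent a b) (hne : a ≠ b) :
    StrictDescend parent a b := by
  rcases Relation.reflTransGen_iff_eq_or_transGen.1 h with rfl | h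
  · exact absurd rfl hne
  · exact h

lemma descend_comparable {a u : V} (hau : Descend parent a u) :
    ∀ b, Descend parent b u → Descend parent a b ∨ Descend parent b a := by
  induction hau with
  | refl => exact fun b hbu => Or.inr hbu
  | @tail x u hax hxu ih =>
    intro b hbu
    rcases Relation.reflTransGen_iff_eq_or_transGen.1 hbu with rfl | hb
    · exact Or.inl (Relation.ReflTransGen.tail hax hxu)
    · rcases Relation.TransGen.tail'_iff.mp hb with ⟨y, hby, hyu⟩
      have : y = x := Option.some.inj (hyu ▸ hxu : (some y : Option V) = some x)
      exact ih b (this ▸ hby)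

lemma no_cycle (htree : IsRootedTree parent r) (a : V) : ¬ StrictDescend parent a a := by
  have hra := htree.2 a
  induction hra with
  | refl =>
    intro hc
    rcases Relation.TransGen.tail'_iff.mp hc with ⟨y, _, hy⟩
    rw [ChildRel, htree.1] at hy
    cases hy
  | @tail x a hrx hxa ih =>
    intro hc
    rcases Relation.TransGen.tail'_iff.mp hc with ⟨y, hay, hya⟩
    have hyx : y = x := Option.some.inj (hya ▸ hxa : (some y : Option V) = some x)
    subst hyx
    exact ih (Relation.TransGen.head' hxa hay)

lemma mem_subtree_self (v : V) : v ∈ SubTree parent v := Relation.ReflTransGen.refl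

lemma subtree_mono {w x : V} (h : Descend parent w x) :
    SubTree parent x ⊆ SubTree parent w := fun _ hy => h.trans hy

lemma leaf_subtree {w : V} (hw : IsLeaf parent w) : SubTree parent w = {w} := by
  ext x
  constructor
  · intro hx
    rcases (hx : Descend parent w x).cases_head with h | ⟨c, hc, _⟩
    · exact h.symm
    · exact absurd hc (hw c)
  · rintro rfl; exact mem_subtree_self parent x

lemma head_decomp {w x : V} (h : Descend parent w x) (hne : w ≠ x) :
    ∃ c, ChildRel parent w c ∧ Descend parent c x := by
  rcases h.cases_head with rfl | ⟨c, h1, h2⟩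
  · exact absurd rfl hne
  · exact ⟨c, h1, h2⟩

lemma children_disjoint (htree : IsRootedTree parent r) {w u1 u2 : V}
    (h1 : ChildRel parent w u1) (h2 : ChildRel parent w u2) (hne : u1 ≠ u2) {x : V}
    (hx1 : x ∈ SubTree parent u1) (hx2 : x ∈ SubTree parent u2) : False := by
  have key : ∀ a b : V, ChildRel parent w a → ChildRel parent w b →
      Descend parent a b → a ≠ b → False := by
    intro a b ha hb hab hneq
    rcases Relation.TransGen.tail'_iff.mp (strict_of_descend_ne parent hab hneq)
      with ⟨y, hay, hyb⟩
    have hyw : y = w := Option.some.inj (hyb ▸ hb : (some y : Option V) = some w)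
    subst hyw
    exact no_cycle parent htree y (Relation.TransGen.head' ha hay)
  rcases descend_comparable parent hx1 u2 hx2 with h | h
  · exact key u1 u2 h1 h2 h hne
  · exact key u2 u1 h2 h1 h hne.symm

lemma strict_wf [Finite V] (htree : IsRootedTree parent r) :
    WellFounded (fun x y : V => StrictDescend parent y x) := by
  haveI : IsTrans V (fun x y : V => StrictDescend parent y x) :=
    ⟨fun _ _ _ hab hbc => hbc.trans hab⟩
  haveI : IsIrrefl V (fun x y : V => StrictDescend parent y x) :=
    ⟨fun a => no_cycle parent htree a⟩
  exact Finite.wellFounded_of_trans_of_irrefl _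

lemma exists_leaf [Finite V] (htree : IsRootedTree parent r) (w : V) :
    ∃ u ∈ SubTree parent w, IsLeaf parent u := by
  refine (strict_wf parent htree).induction
    (C := fun w => ∃ u ∈ SubTree parent w, IsLeaf parent u) w ?_
  intro x ih
  by_cases hx : IsLeaf parent x
  · exact ⟨x, mem_subtree_self parent x, hx⟩
  · simp only [IsLeaf, not_forall, not_not] at hx
    obtain ⟨c, hc⟩ := hx
    obtain ⟨u, hu, hul⟩ := ih c (Relation.TransGen.single hc)
    exact ⟨u, subtree_mono parent (Relation.ReflTransGen.single hc) hu, hul⟩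

lemma consec_parent (htree : IsRootedTree parent r) {S : Set V} {v u a b : V}
    (hmem : ∀ x, OnPath parent v u x → x ∈ S)
    (hc : Consecutive parent S v u a b) : ChildRel parent a b := by
  obtain ⟨ha, hb, hpa, hpb, hab, hnoc⟩ := hc
  rcases Relation.TransGen.tail'_iff.mp hab with ⟨y, hay, hyb⟩
  by_cases hya : a = y
  · exact hya ▸ hyb
  · exfalso
    apply hnoc
    have hpy : OnPath parent v u y :=
      ⟨hpa.1.trans hay, Relation.ReflTransGen.head hyb hpb.2⟩
    exact ⟨y, hmem y hpy, hpy, strict_of_descend_ne parent hay hya,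
      Relation.TransGen.single hyb⟩

end Infra

/-- `S` is a feasible portion of the simplification inside `SubTree w`, given that the
closest selected ancestor is `v`. -/
def VFeas {V : Type*} (parent : V → Option V) (Es : V → V → Prop) (v w : V)
    (S : Set V) : Prop :=
  S ⊆ SubTree parent w ∧
  (∀ u ∈ SubTree parent w, IsLeaf parent u → u ∈ S) ∧
  (∀ u ∈ SubTree parent w, IsLeaf parent u →
    ∀ a b, Consecutive parent (insert v S) v u a b → Es a b)

/-- The optimal value of the DP cell: minimum size of a `VFeas` set. -/
noncomputable def gVal {V : Type*} (parent : V → Option V) (Es : V → V → Prop)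
    (v w : V) : ℕ∞ :=
  sInf ((fun k : ℕ => (k : ℕ∞)) '' {k | ∃ S : Set V, VFeas parent Es v w S ∧ S.ncard = k})

section Quant
variable {V : Type*} (parent : V → Option V) (Es : V → V → Prop) {r : V}

lemma cast_sInf_image {K : Set ℕ} (h : K.Nonempty) :
    sInf ((fun k : ℕ => (k : ℕ∞)) '' K) = ((sInf K : ℕ) : ℕ∞) := by
  refine le_antisymm (sInf_le ⟨_, Nat.sInf_mem h, rfl⟩) (le_sInf ?_)
  rintro b ⟨k, hk, rfl⟩
  show ((sInf K : ℕ) : ℕ∞) ≤ (k : ℕ∞)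
  exact_mod_cast Nat.sInf_le hk

lemma gval_le {v w : V} {S : Set V} (hS : VFeas parent Es v w S) :
    gVal parent Es v w ≤ (S.ncard : ℕ∞) :=
  sInf_le ⟨S.ncard, ⟨S, hS, rfl⟩, rfl⟩

lemma le_gval {v w : V} {n : ℕ∞} (hn : ∀ S, VFeas parent Es v w S → n ≤ (S.ncard : ℕ∞)) :
    n ≤ gVal parent Es v w := by
  refine le_sInf ?_
  rintro b ⟨k, ⟨S, hS, rfl⟩, rfl⟩
  exact hn S hS

lemma gval_attained {v w : V} (hne : ∃ S, VFeas parent Es v w S) :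
    ∃ S, VFeas parent Es v w S ∧ (S.ncard : ℕ∞) = gVal parent Es v w := by
  obtain ⟨S0, hS0⟩ := hne
  have hK : {k | ∃ S : Set V, VFeas parent Es v w S ∧ S.ncard = k}.Nonempty :=
    ⟨S0.ncard, S0, hS0, rfl⟩
  obtain ⟨S, hS, hcard⟩ := Nat.sInf_mem hK
  exact ⟨S, hS, by rw [gVal, cast_sInf_image hK, hcard]⟩

lemma gval_of_empty {v w : V} (hne : ¬ ∃ S, VFeas parent Es v w S) :
    gVal parent Es v w = ⊤ := by
  have : {k | ∃ S : Set V, VFeas parent Es v w S ∧ S.ncard = k} = ∅ := by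
    ext k; simp only [Set.mem_setOf_eq, Set.mem_empty_iff_false, iff_false]
    rintro ⟨S, hS, -⟩; exact hne ⟨S, hS⟩
  rw [gVal, this, Set.image_empty, sInf_empty]

lemma gval_nonempty_of_ne_top {v w : V} (h : gVal parent Es v w ≠ ⊤) :
    ∃ S, VFeas parent Es v w S := by
  by_contra hc; exact h (gval_of_empty parent Es hc)

lemma sval_le {v : V} {S : Set V} (hS : Feasible parent Es v S) :
    sVal parent Es v ≤ S.ncard :=
  Nat.sInf_le ⟨S, hS, rfl⟩

lemma sval_attained {v : V} (hne : ∃ S, Feasible parent Es v S) :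
    ∃ S, Feasible parent Es v S ∧ S.ncard = sVal parent Es v := by
  obtain ⟨S0, hS0⟩ := hne
  obtain ⟨S, hS, hc⟩ := Nat.sInf_mem (⟨S0.ncard, S0, hS0, rfl⟩ :
    {k | ∃ S : Set V, Feasible parent Es v S ∧ S.ncard = k}.Nonempty)
  exact ⟨S, hS, hc⟩

lemma full_feasible [Finite V] (htree : IsRootedTree parent r)
    (hEsParent : ∀ w u, parent u = some w → Es w u) (v : V) :
    Feasible parent Es v (SubTree parent v) := by
  refine ⟨subset_rfl, mem_subtree_self parent v, fun u hu _ => hu, ?_⟩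
  intro u hu hul a b hc
  exact hEsParent a b (consec_parent parent htree (fun x hx => hx.1) hc)

lemma sval_leaf [Finite V] (htree : IsRootedTree parent r)
    (hEsParent : ∀ w u, parent u = some w → Es w u) {w : V} (hw : IsLeaf parent w) :
    sVal parent Es w = 1 := by
  have hfeas : Feasible parent Es w {w} := by
    refine ⟨by rw [leaf_subtree parent hw], rfl, ?_, ?_⟩
    · intro u hu _; rw [leaf_subtree parent hw] at hu; exact hu
    · intro u hu hul a b hc
      obtain ⟨ha, hb, -, -, hab, -⟩ := hc
      rw [Set.mem_singleton_iff] at ha hb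
      subst ha; subst hb
      exact absurd hab (no_cycle parent htree _)
  have h1 : sVal parent Es w ≤ 1 := by
    have := sval_le parent Es hfeas
    rwa [Set.ncard_singleton] at this
  have h2 : 1 ≤ sVal parent Es w := by
    obtain ⟨S, hS, hc⟩ := sval_attained parent Es ⟨{w}, hfeas⟩
    have hpos : 0 < S.ncard := (Set.ncard_pos (Set.toFinite S)).mpr ⟨w, hS.2.1⟩
    omega
  omega

lemma ncard_biUnion {W : Type*} [DecidableEq W] [Finite V] (t : Finset W) (A : W → Set V)
    (hdisj : ∀ u1 ∈ t, ∀ u2 ∈ t, u1 ≠ u2 → Disjoint (A u1) (A u2)) :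
    (⋃ u ∈ t, A u).ncard = ∑ u ∈ t, (A u).ncard := by
  classical
  induction t using Finset.induction_on with
  | empty => simp
  | @insert a s ha ih =>
    rw [Finset.set_biUnion_insert, Finset.sum_insert ha,
      Set.ncard_union_eq ?_ (Set.toFinite _) (Set.toFinite _),
      ih (fun u1 h1 u2 h2 hne => hdisj u1 (Finset.mem_insert_of_mem h1)
        u2 (Finset.mem_insert_of_mem h2) hne)]
    refine Set.disjoint_left.mpr ?_
    intro x hx hx'
    simp only [Set.mem_iUnion] at hx'
    obtain ⟨u, hu, hxu⟩ := hx'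
    exact Set.disjoint_left.mp
      (hdisj a (Finset.mem_insert_self a s) u (Finset.mem_insert_of_mem hu)
        (fun h => ha (h ▸ hu))) hx hxu

end Quant

section Core
variable {V : Type*} [Fintype V] [DecidableEq V] (parent : V → Option V)
  (Es : V → V → Prop) {r : V}

lemma mem_childrenOf {w u : V} : u ∈ childrenOf parent w ↔ ChildRel parent w u := by
  simp [childrenOf, ChildRel]

open scoped Classical in
lemma gval_leaf (htree : IsRootedTree parent r) {v w : V}
    (hvw : StrictDescend parent v w) (hw : IsLeaf parent w) :
    gVal parent Es v w = if Es v w then (1 : ℕ∞) else ⊤ := by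
  split_ifs with hEs
  · refine le_antisymm ?_ ?_
    · have hfeas : VFeas parent Es v w {w} := by
        refine ⟨by rw [leaf_subtree parent hw], ?_, ?_⟩
        · intro u hu _; rw [leaf_subtree parent hw] at hu; exact hu
        · intro u hu hul a b hc
          obtain ⟨ha, hb, -, -, hab, -⟩ := hc
          rcases Set.mem_insert_iff.mp ha with rfl | ha'
          · rcases Set.mem_insert_iff.mp hb with rfl | hb'
            · exact absurd hab (no_cycle parent htree _)
            · rw [Set.mem_singleton_iff] at hb'; subst hb'; exact hEs
          · rw [Set.mem_singleton_iff] at ha'; subst ha'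
            rcases Set.mem_insert_iff.mp hb with rfl | hb'
            · exact absurd (hab.trans hvw) (no_cycle parent htree _)
            · rw [Set.mem_singleton_iff] at hb'; subst hb'
              exact absurd hab (no_cycle parent htree _)
      have := gval_le parent Es hfeas
      rw [Set.ncard_singleton] at this
      exact_mod_cast this
    · refine le_gval parent Es ?_
      intro S hS
      have hwS : w ∈ S := hS.2.1 w (mem_subtree_self parent w) hw
      have : 1 ≤ S.ncard := (Set.ncard_pos (Set.toFinite S)).mpr ⟨w, hwS⟩
      exact_mod_cast this
  · apply gval_of_empty
    rintro ⟨S, hsub, hleaves, hconsec⟩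
    have hwS : w ∈ S := hleaves w (mem_subtree_self parent w) hw
    apply hEs
    refine hconsec w (mem_subtree_self parent w) hw v w
      ⟨Set.mem_insert _ _, Set.mem_insert_of_mem _ hwS,
        ⟨Relation.ReflTransGen.refl, hvw.to_reflTransGen⟩,
        ⟨hvw.to_reflTransGen, Relation.ReflTransGen.refl⟩, hvw, ?_⟩
    rintro ⟨c, hcS, hcp, hvc, hcw⟩
    rcases Set.mem_insert_iff.mp hcS with rfl | hcS'
    · exact no_cycle parent htree _ hvc
    · exact no_cycle parent htree _ (hcw.trans_left (hsub hcS'))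

lemma vfeas_mem_feasible (htree : IsRootedTree parent r) {v w : V} {S : Set V}
    (hvw : StrictDescend parent v w) (hS : VFeas parent Es v w S) (hwS : w ∈ S) :
    Es v w ∧ Feasible parent Es w S := by
  obtain ⟨hsub, hleaves, hconsec⟩ := hS
  have hEs : Es v w := by
    obtain ⟨u, hu, hul⟩ := exists_leaf parent htree w
    refine hconsec u hu hul v w ⟨Set.mem_insert _ _, Set.mem_insert_of_mem _ hwS,
      ⟨Relation.ReflTransGen.refl, hvw.to_reflTransGen.trans hu⟩,
      ⟨hvw.to_reflTransGen, hu⟩, hvw, ?_⟩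
    rintro ⟨c, hcS, hcp, hvc, hcw⟩
    rcases Set.mem_insert_iff.mp hcS with rfl | hcS'
    · exact no_cycle parent htree _ hvc
    · exact no_cycle parent htree _ (hcw.trans_left (hsub hcS'))
  refine ⟨hEs, hsub, hwS, hleaves, ?_⟩
  intro u hu hul a b hc
  obtain ⟨ha, hb, hpa, hpb, hab, hnoc⟩ := hc
  refine hconsec u hu hul a b ⟨Set.mem_insert_of_mem _ ha, Set.mem_insert_of_mem _ hb,
    ⟨hvw.to_reflTransGen.trans hpa.1, hpa.2⟩, ⟨hvw.to_reflTransGen.trans hpb.1, hpb.2⟩,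
    hab, ?_⟩
  rintro ⟨c, hcS, hcp, hac, hcb⟩
  rcases Set.mem_insert_iff.mp hcS with rfl | hcS'
  · exact no_cycle parent htree _ (hac.trans_left ((hvw.to_reflTransGen).trans (hsub ha)))
  · exact hnoc ⟨c, hcS', ⟨hsub hcS', hcp.2⟩, hac, hcb⟩

lemma feasible_vfeas (htree : IsRootedTree parent r)
    (hEsDesc : ∀ a b, Es a b → StrictDescend parent a b) {v w : V} {S : Set V}
    (hEs : Es v w) (hS : Feasible parent Es w S) : VFeas parent Es v w S := by
  have hvw : StrictDescend parent v w := hEsDesc v w hEs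
  obtain ⟨hsub, hwS, hleaves, hconsec⟩ := hS
  refine ⟨hsub, hleaves, ?_⟩
  intro u hu hul a b hc
  obtain ⟨ha, hb, hpa, hpb, hab, hnoc⟩ := hc
  rcases Set.mem_insert_iff.mp ha with rfl | haS
  · have hbS : b ∈ S := by
      rcases Set.mem_insert_iff.mp hb with rfl | hbS
      · exact absurd hab (no_cycle parent htree _)
      · exact hbS
    by_cases hbw : b = w
    · subst hbw; exact hEs
    · exfalso
      apply hnoc
      exact ⟨w, Set.mem_insert_of_mem _ hwS, ⟨hvw.to_reflTransGen, hu⟩, hvw,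
        strict_of_descend_ne parent (hsub hbS) (Ne.symm hbw)⟩
  · have hbS : b ∈ S := by
      rcases Set.mem_insert_iff.mp hb with rfl | hbS
      · exact absurd (hab.trans_left ((hvw.to_reflTransGen).trans (hsub haS)))
          (no_cycle parent htree _)
      · exact hbS
    refine hconsec u hu hul a b ⟨haS, hbS, ⟨hsub haS, hpa.2⟩, ⟨hsub hbS, hpb.2⟩, hab, ?_⟩
    rintro ⟨c, hcS, hcp, hac, hcb⟩
    exact hnoc ⟨c, Set.mem_insert_of_mem _ hcS,
      ⟨hvw.to_reflTransGen.trans hcp.1, hcp.2⟩, hac, hcb⟩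

lemma vfeas_inter_child (htree : IsRootedTree parent r) {v w : V} {S : Set V}
    (hS : VFeas parent Es v w S) (hwS : w ∉ S) {u0 : V} (hu0 : ChildRel parent w u0) :
    VFeas parent Es v u0 (S ∩ SubTree parent u0) := by
  obtain ⟨hsub, hleaves, hconsec⟩ := hS
  have hsub0 : SubTree parent u0 ⊆ SubTree parent w :=
    subtree_mono parent (Relation.ReflTransGen.single hu0)
  have hkey : ∀ c ∈ S, ∀ x ∈ SubTree parent u0, Descend parent c x →
      c ∈ SubTree parent u0 := by
    intro c hcS x hx hcx
    have hwc : Descend parent w c := hsub hcS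
    have hcw : w ≠ c := fun h => hwS (by rw [h]; exact hcS)
    obtain ⟨c', hc', hc'c⟩ := head_decomp parent hwc hcw
    by_cases hcc : c' = u0
    · exact show c ∈ SubTree parent u0 from hcc ▸ hc'c
    · exact (children_disjoint parent htree hc' hu0 hcc
        (Relation.ReflTransGen.trans hc'c hcx) hx).elim
  refine ⟨Set.inter_subset_right, ?_, ?_⟩
  · intro x hx hxl
    exact ⟨hleaves x (hsub0 hx) hxl, hx⟩
  · intro x hx hxl a b hc
    obtain ⟨ha, hb, hpa, hpb, hab, hnoc⟩ := hc
    have hmem : ∀ y, y ∈ insert v (S ∩ SubTree parent u0) → y ∈ insert v S := by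
      intro y hy
      rcases Set.mem_insert_iff.mp hy with rfl | hy'
      · exact Set.mem_insert _ _
      · exact Set.mem_insert_of_mem _ hy'.1
    refine hconsec x (hsub0 hx) hxl a b ⟨hmem a ha, hmem b hb, hpa, hpb, hab, ?_⟩
    rintro ⟨c, hcS, hcp, hac, hcb⟩
    apply hnoc
    refine ⟨c, ?_, hcp, hac, hcb⟩
    rcases Set.mem_insert_iff.mp hcS with rfl | hcS'
    · exact Set.mem_insert _ _
    · exact Set.mem_insert_of_mem _ ⟨hcS', hkey c hcS' x hx hcp.2⟩

lemma vfeas_partition {w : V} {S : Set V} (hsub : S ⊆ SubTree parent w) (hwS : w ∉ S) :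
    S = ⋃ u ∈ childrenOf parent w, (S ∩ SubTree parent u) := by
  ext x
  simp only [Set.mem_iUnion, exists_prop, Set.mem_inter_iff]
  constructor
  · intro hx
    have hwx : Descend parent w x := hsub hx
    have hne : w ≠ x := fun h => hwS (by rw [h]; exact hx)
    obtain ⟨c, hc, hcx⟩ := head_decomp parent hwx hne
    exact ⟨c, (mem_childrenOf parent).mpr hc, hx, hcx⟩
  · rintro ⟨u, -, hx, -⟩; exact hx

lemma vfeas_union (htree : IsRootedTree parent r) {v w : V} (hw : ¬ IsLeaf parent w)
    (T : V → Set V) (hT : ∀ u ∈ childrenOf parent w, VFeas parent Es v u (T u)) :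
    VFeas parent Es v w (⋃ u ∈ childrenOf parent w, T u) := by
  have hTsub : ∀ u ∈ childrenOf parent w, T u ⊆ SubTree parent u := fun u hu => (hT u hu).1
  refine ⟨?_, ?_, ?_⟩
  · intro x hx
    simp only [Set.mem_iUnion, exists_prop] at hx
    obtain ⟨u, hu, hxu⟩ := hx
    exact subtree_mono parent
      (Relation.ReflTransGen.single ((mem_childrenOf parent).mp hu)) (hTsub u hu hxu)
  · intro x hx hxl
    have hwx : w ≠ x := fun h => hw (by rw [h]; exact hxl)
    obtain ⟨c, hc, hcx⟩ := head_decomp parent hx hwx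
    have hcmem := (mem_childrenOf parent).mpr hc
    simp only [Set.mem_iUnion, exists_prop]
    exact ⟨c, hcmem, (hT c hcmem).2.1 x hcx hxl⟩
  · intro x hx hxl a b hc
    obtain ⟨ha, hb, hpa, hpb, hab, hnoc⟩ := hc
    have hwx : w ≠ x := fun h => hw (by rw [h]; exact hxl)
    obtain ⟨u, hu, hux⟩ := head_decomp parent hx hwx
    have humem := (mem_childrenOf parent).mpr hu
    have hcast : ∀ y, y ∈ insert v (⋃ u' ∈ childrenOf parent w, T u') →
        Descend parent y x → y ∈ insert v (T u) := by
      intro y hy hyx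
      rcases Set.mem_insert_iff.mp hy with rfl | hy'
      · exact Set.mem_insert _ _
      · simp only [Set.mem_iUnion, exists_prop] at hy'
        obtain ⟨u', hu', hyu'⟩ := hy'
        have hyd : y ∈ SubTree parent u' := hTsub u' hu' hyu'
        have hxu' : x ∈ SubTree parent u' :=
          show Descend parent u' x from Relation.ReflTransGen.trans hyd hyx
        by_cases h : u' = u
        · exact Set.mem_insert_of_mem _ (h ▸ hyu')
        · exact (children_disjoint parent htree ((mem_childrenOf parent).mp hu')
            hu h hxu' hux).elim
    refine (hT u humem).2.2 x hux hxl a b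
      ⟨hcast a ha hpa.2, hcast b hb hpb.2, hpa, hpb, hab, ?_⟩
    rintro ⟨c, hcS, hcp, hac, hcb⟩
    apply hnoc
    refine ⟨c, ?_, hcp, hac, hcb⟩
    rcases Set.mem_insert_iff.mp hcS with rfl | hcS'
    · exact Set.mem_insert _ _
    · refine Set.mem_insert_of_mem _ ?_
      simp only [Set.mem_iUnion, exists_prop]
      exact ⟨u, humem, hcS'⟩

lemma vfeas_full (htree : IsRootedTree parent r)
    (hEsParent : ∀ w u, parent u = some w → Es w u) {v u0 : V}
    (hu0 : ChildRel parent v u0) :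
    VFeas parent Es v u0 (SubTree parent u0) := by
  refine ⟨subset_rfl, fun x hx _ => hx, ?_⟩
  intro x hx hxl a b hc
  refine hEsParent a b (consec_parent parent htree ?_ hc)
  intro y hy
  obtain ⟨hvy, hyx⟩ := hy
  by_cases h : v = y
  · rw [← h]; exact Set.mem_insert _ _
  · obtain ⟨c, hc', hcy⟩ := head_decomp parent hvy h
    by_cases hcu : c = u0
    · exact Set.mem_insert_of_mem _ (show y ∈ SubTree parent u0 from hcu ▸ hcy)
    · exact (children_disjoint parent htree hc' hu0 hcu
        (Relation.ReflTransGen.trans hcy hyx) hx).elim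

end Core

section Main
variable {V : Type*} [Fintype V] [DecidableEq V] (parent : V → Option V)
  (Es : V → V → Prop) {r : V}

open scoped Classical in
lemma gval_inner (htree : IsRootedTree parent r)
    (hEsDesc : ∀ a b, Es a b → StrictDescend parent a b)
    (hEsParent : ∀ w u, parent u = some w → Es w u) {v w : V}
    (hvw : StrictDescend parent v w) (hw : ¬ IsLeaf parent w) :
    gVal parent Es v w = min (if Es v w then (sVal parent Es w : ℕ∞) else ⊤)
      (∑ u ∈ childrenOf parent w, gVal parent Es v u) := by
  refine le_antisymm (le_min ?_ ?_) ?_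
  · split_ifs with hEs
    · obtain ⟨S, hS, hcard⟩ := sval_attained parent Es
        ⟨_, full_feasible parent Es htree hEsParent w⟩
      have := gval_le parent Es (feasible_vfeas parent Es htree hEsDesc hEs hS)
      rw [hcard] at this
      exact this
    · exact le_top
  · by_cases htop : (∑ u ∈ childrenOf parent w, gVal parent Es v u) = ⊤
    · rw [htop]; exact le_top
    · have hlt : ∀ u ∈ childrenOf parent w, gVal parent Es v u ≠ ⊤ := by
        intro u hu h
        exact htop (top_le_iff.mp (h ▸ Finset.single_le_sum
          (f := fun u => gVal parent Es v u) (fun i _ => zero_le) hu))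
      have hch : ∀ u : V, ∃ S : Set V, u ∈ childrenOf parent w →
          VFeas parent Es v u S ∧ (S.ncard : ℕ∞) = gVal parent Es v u := by
        intro u
        by_cases hu : u ∈ childrenOf parent w
        · obtain ⟨S, h1, h2⟩ := gval_attained parent Es
            (gval_nonempty_of_ne_top parent Es (hlt u hu))
          exact ⟨S, fun _ => ⟨h1, h2⟩⟩
        · exact ⟨∅, fun h => absurd h hu⟩
      choose T hT using hch
      have hunion := vfeas_union parent Es htree hw T (fun u hu => (hT u hu).1)
      have hcard : (((⋃ u ∈ childrenOf parent w, T u).ncard : ℕ) : ℕ∞)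
          = ∑ u ∈ childrenOf parent w, gVal parent Es v u := by
        rw [ncard_biUnion _ _ (fun u1 h1 u2 h2 hne => Set.disjoint_left.mpr
          (fun x hx1 hx2 => children_disjoint parent htree
            ((mem_childrenOf parent).mp h1) ((mem_childrenOf parent).mp h2) hne
            ((hT u1 h1).1.1 hx1) ((hT u2 h2).1.1 hx2))), Nat.cast_sum]
        exact Finset.sum_congr rfl (fun u hu => (hT u hu).2)
      calc gVal parent Es v w ≤ _ := gval_le parent Es hunion
        _ = _ := hcard
  · refine le_gval parent Es ?_
    intro S hS
    by_cases hwS : w ∈ S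
    · obtain ⟨hEs, hfeas⟩ := vfeas_mem_feasible parent Es htree hvw hS hwS
      refine le_trans (min_le_left _ _) ?_
      rw [if_pos hEs]
      exact_mod_cast sval_le parent Es hfeas
    · refine le_trans (min_le_right _ _) ?_
      have hpart := vfeas_partition parent hS.1 hwS
      have hcard : S.ncard = ∑ u ∈ childrenOf parent w, (S ∩ SubTree parent u).ncard := by
        conv_lhs => rw [hpart]
        exact ncard_biUnion _ _ (fun u1 h1 u2 h2 hne => Set.disjoint_left.mpr
          (fun x hx1 hx2 => children_disjoint parent htree
            ((mem_childrenOf parent).mp h1) ((mem_childrenOf parent).mp h2) hne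
            hx1.2 hx2.2))
      rw [hcard, Nat.cast_sum]
      exact Finset.sum_le_sum (fun u hu => gval_le parent Es
        (vfeas_inter_child parent Es htree hS hwS ((mem_childrenOf parent).mp hu)))

lemma feasible_self_vfeas {v : V} {S : Set V} (hv : ¬ IsLeaf parent v)
    (hS : Feasible parent Es v S) : VFeas parent Es v v (S \ {v}) := by
  obtain ⟨hsub, hvS, hleaves, hconsec⟩ := hS
  have hins : insert v (S \ {v}) = S := by
    rw [Set.insert_diff_singleton, Set.insert_eq_self.mpr hvS]
  refine ⟨fun x hx => hsub hx.1, ?_, ?_⟩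
  · intro u hu hul
    exact ⟨hleaves u hu hul, fun h =>
      hv (by rw [← Set.mem_singleton_iff.mp h]; exact hul)⟩
  · intro u hu hul a b hc
    rw [hins] at hc
    exact hconsec u hu hul a b hc

lemma vfeas_self_feasible {v : V} {S : Set V}
    (hS : VFeas parent Es v v S) : Feasible parent Es v (insert v S) := by
  obtain ⟨hsub, hleaves, hconsec⟩ := hS
  refine ⟨?_, Set.mem_insert _ _, ?_, ?_⟩
  · intro x hx
    rcases Set.mem_insert_iff.mp hx with rfl | hx'
    · exact mem_subtree_self parent x
    · exact hsub hx'
  · intro u hu hul; exact Set.mem_insert_of_mem _ (hleaves u hu hul)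
  · exact hconsec

lemma sval_root (htree : IsRootedTree parent r)
    (hEsDesc : ∀ a b, Es a b → StrictDescend parent a b)
    (hEsParent : ∀ w u, parent u = some w → Es w u) {v : V}
    (hv : ¬ IsLeaf parent v) :
    (sVal parent Es v : ℕ∞) = 1 + ∑ u ∈ childrenOf parent v, gVal parent Es v u := by
  refine le_antisymm ?_ ?_
  · have hch : ∀ u : V, ∃ S : Set V, u ∈ childrenOf parent v →
        VFeas parent Es v u S ∧ (S.ncard : ℕ∞) = gVal parent Es v u := by
      intro u
      by_cases hu : u ∈ childrenOf parent v
      · have hfull : VFeas parent Es v u (SubTree parent u) :=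
          vfeas_full parent Es htree hEsParent ((mem_childrenOf parent).mp hu)
        obtain ⟨S, h1, h2⟩ := gval_attained parent Es ⟨_, hfull⟩
        exact ⟨S, fun _ => ⟨h1, h2⟩⟩
      · exact ⟨∅, fun h => absurd h hu⟩
    choose T hT using hch
    have hUfeas := vfeas_union parent Es htree hv T (fun u hu => (hT u hu).1)
    have hvU : v ∉ ⋃ u ∈ childrenOf parent v, T u := by
      intro hvU
      simp only [Set.mem_iUnion, exists_prop] at hvU
      obtain ⟨u, hu, hvu⟩ := hvU
      have : v ∈ SubTree parent u := (hT u hu).1.1 hvu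
      exact no_cycle parent htree v
        (Relation.TransGen.head' ((mem_childrenOf parent).mp hu) this)
    have hfeas := vfeas_self_feasible parent Es hUfeas
    have hUcard : (((⋃ u ∈ childrenOf parent v, T u).ncard : ℕ) : ℕ∞)
        = ∑ u ∈ childrenOf parent v, gVal parent Es v u := by
      rw [ncard_biUnion _ _ (fun u1 h1 u2 h2 hne => Set.disjoint_left.mpr
        (fun x hx1 hx2 => children_disjoint parent htree
          ((mem_childrenOf parent).mp h1) ((mem_childrenOf parent).mp h2) hne
          ((hT u1 h1).1.1 hx1) ((hT u2 h2).1.1 hx2))), Nat.cast_sum]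
      exact Finset.sum_congr rfl (fun u hu => (hT u hu).2)
    have hicard : (insert v (⋃ u ∈ childrenOf parent v, T u)).ncard
        = (⋃ u ∈ childrenOf parent v, T u).ncard + 1 :=
      Set.ncard_insert_of_notMem hvU (Set.toFinite _)
    calc (sVal parent Es v : ℕ∞)
        ≤ ((insert v (⋃ u ∈ childrenOf parent v, T u)).ncard : ℕ∞) := by
          exact_mod_cast sval_le parent Es hfeas
      _ = 1 + (((⋃ u ∈ childrenOf parent v, T u).ncard : ℕ) : ℕ∞) := by
          rw [hicard]; push_cast; ring
      _ = _ := by rw [hUcard]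
  · obtain ⟨S, hS, hcard⟩ := sval_attained parent Es
      ⟨_, full_feasible parent Es htree hEsParent v⟩
    have hSv := feasible_self_vfeas parent Es hv hS
    have hvS' : v ∉ S \ {v} := fun h => h.2 rfl
    have hpart := vfeas_partition parent hSv.1 hvS'
    have hncard : S.ncard = 1 + (S \ {v}).ncard := by
      have := Set.ncard_diff_singleton_add_one hS.2.1 (Set.toFinite S)
      omega
    have hsum : (S \ {v}).ncard
        = ∑ u ∈ childrenOf parent v, ((S \ {v}) ∩ SubTree parent u).ncard := by
      conv_lhs => rw [hpart]
      exact ncard_biUnion _ _ (fun u1 h1 u2 h2 hne => Set.disjoint_left.mpr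
        (fun x hx1 hx2 => children_disjoint parent htree
          ((mem_childrenOf parent).mp h1) ((mem_childrenOf parent).mp h2) hne
          hx1.2 hx2.2))
    rw [← hcard, hncard, hsum]
    push_cast
    refine add_le_add_right ?_ 1
    exact Finset.sum_le_sum (fun u hu => gval_le parent Es
      (vfeas_inter_child parent Es htree hSv hvS' ((mem_childrenOf parent).mp hu)))

end Main

/-- Correctness of the helping function `h` of the dynamic program: if `h` satisfies the
bottom-up recurrence on `Sub(v) \ {v}` (for leaves, `h(w) = s(w)` if `(v,w) ∈ E_s` and `∞`
otherwise; for inner vertices, additionally the minimum with `Σ_{u ∈ N(w)} h(u)` is taken),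
then `s(v) = 1 + Σ_{u ∈ N(v)} h(u)` and this value is finite. -/
theorem helping_function_correct {V : Type*} [Fintype V] [DecidableEq V]
    (parent : V → Option V) (r : V) (Es : V → V → Prop)
    (htree : IsRootedTree parent r)
    (hEsDesc : ∀ a b, Es a b → StrictDescend parent a b)
    (hEsParent : ∀ w u, parent u = some w → Es w u)
    (v : V) (hv : ¬ IsLeaf parent v)
    (h : V → ℕ∞)
    (hleaf : ∀ w ∈ SubTree parent v, w ≠ v → IsLeaf parent w →
      (Es v w → h w = (sVal parent Es w : ℕ∞)) ∧ (¬ Es v w → h w = ⊤))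
    (hinner : ∀ w ∈ SubTree parent v, w ≠ v → ¬ IsLeaf parent w →
      (Es v w → h w = min (sVal parent Es w : ℕ∞) (∑ u ∈ childrenOf parent w, h u)) ∧
      (¬ Es v w → h w = ∑ u ∈ childrenOf parent w, h u)) :
    (∑ u ∈ childrenOf parent v, h u) ≠ ⊤ ∧
    (sVal parent Es v : ℕ∞) = 1 + ∑ u ∈ childrenOf parent v, h u := by
  have key : ∀ w, StrictDescend parent v w → h w = gVal parent Es v w := by
    intro w hw'
    refine (strict_wf parent htree).induction
      (C := fun x => StrictDescend parent v x → h x = gVal parent Es v x) w ?_ hw'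
    intro x ih hvx
    have hx_sub : x ∈ SubTree parent v := hvx.to_reflTransGen
    have hx_ne : x ≠ v := by
      rintro rfl; exact no_cycle parent htree x hvx
    by_cases hlx : IsLeaf parent x
    · rw [gval_leaf parent Es htree hvx hlx]
      obtain ⟨h1, h2⟩ := hleaf x hx_sub hx_ne hlx
      split_ifs with hE
      · rw [h1 hE, sval_leaf parent Es htree hEsParent hlx]; norm_num
      · exact h2 hE
    · rw [gval_inner parent Es htree hEsDesc hEsParent hvx hlx]
      have IH : ∀ u ∈ childrenOf parent x, h u = gVal parent Es v u := fun u hu =>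
        ih u (Relation.TransGen.single ((mem_childrenOf parent).mp hu))
          (hvx.tail ((mem_childrenOf parent).mp hu))
      obtain ⟨h1, h2⟩ := hinner x hx_sub hx_ne hlx
      by_cases hE : Es v x
      · rw [h1 hE, if_pos hE, Finset.sum_congr rfl IH]
      · rw [h2 hE, if_neg hE, Finset.sum_congr rfl IH, min_eq_right le_top]
  have hchild : ∀ u ∈ childrenOf parent v, h u = gVal parent Es v u := fun u hu =>
    key u (Relation.TransGen.single ((mem_childrenOf parent).mp hu))
  have heq : (sVal parent Es v : ℕ∞) = 1 + ∑ u ∈ childrenOf parent v, h u := by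
    rw [Finset.sum_congr rfl hchild]
    exact sval_root parent Es htree hEsDesc hEsParent hv
  refine ⟨fun htop => ?_, heq⟩
  rw [htop, add_top] at heq
  exact ENat.coe_ne_top _ heq
end

section
/- If S is a feasible simplification of Sub(r), then the undirected graph on vertex set S whose edges are the pairs {v, w} with (v, w) ∈ E_s or (w, v) ∈ E_s is connected, and S contains the root r and every leaf of T. -/
/-- The undirected shortcut graph: `a` and `b` are adjacent if they are distinct and
`(a, b)` or `(b, a)` is a shortcut. -/
def shortcutGraph {V : Type*} (Es : V → V → Prop) : SimpleGraph V where
  Adj a b := a ≠ b ∧ (Es a b ∨ Es b a)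
  symm := ⟨fun a b hab => ⟨hab.1.symm, hab.2.symm⟩⟩
  loopless := ⟨fun a ha => ha.1 rfl⟩


/-! The root lies in `S`, and every other `v ∈ S` has, on the path from the root to a leaf below
`v`, a nearest strict ancestor in `S`; feasibility makes that pair a shortcut, so induction on the
depth of `v` joins it to the root. -/

namespace IsRootedTree

variable {V : Type*} {parent : V → Option V} {r : V}

theorem acc_childRel (htree : IsRootedTree parent r) (v : V) : Acc (ChildRel parent) v := by
  induction htree.2 v with
  | refl => exact ⟨r, fun a ha => by simp [ChildRel, htree.1] at ha⟩
  | tail _ hbc ih =>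
    refine ⟨_, fun a hac => ?_⟩
    obtain rfl := Option.some.inj (hac.symm.trans hbc)
    exact ih

theorem wellFounded_strictDescend (htree : IsRootedTree parent r) :
    WellFounded (StrictDescend parent) :=
  ⟨fun v => (htree.acc_childRel v).transGen⟩

theorem ne_of_strictDescend (htree : IsRootedTree parent r) {a b : V}
    (hab : StrictDescend parent a b) : a ≠ b :=
  fun h => htree.wellFounded_strictDescend.irrefl.irrefl b (h ▸ hab)

theorem wellFounded_flip_strictDescend [Finite V] (htree : IsRootedTree parent r) :
    WellFounded (flip (StrictDescend parent)) :=
  have : IsTrans V (flip (StrictDescend parent)) := ⟨fun _ _ _ hab hbc => hbc.trans hab⟩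
  have : Std.Irrefl (flip (StrictDescend parent)) :=
    ⟨fun _ h => htree.ne_of_strictDescend h rfl⟩
  Finite.wellFounded_of_trans_of_irrefl _

theorem exists_descend_isLeaf [Finite V] (htree : IsRootedTree parent r) (v : V) :
    ∃ u, Descend parent v u ∧ IsLeaf parent u := by
  induction v using htree.wellFounded_flip_strictDescend.induction with
  | _ v ih =>
    by_cases hv : IsLeaf parent v
    · exact ⟨v, .refl, hv⟩
    · obtain ⟨c, hc⟩ : ∃ c, parent c = some v := by simpa [IsLeaf] using hv
      obtain ⟨u, hcu, hu⟩ := ih c (.single hc)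
      exact ⟨u, .head hc hcu, hu⟩

theorem exists_consecutive [Finite V] (htree : IsRootedTree parent r) {S : Set V} {u v : V}
    (hr : r ∈ S) (hv : v ∈ S) (hrv : StrictDescend parent r v) (hvu : Descend parent v u) :
    ∃ a, Consecutive parent S r u a v := by
  obtain ⟨a, ⟨haS, hpath, hav⟩, hnearest⟩ := htree.wellFounded_flip_strictDescend.has_min
    {c | c ∈ S ∧ OnPath parent r u c ∧ StrictDescend parent c v}
    ⟨r, hr, ⟨.refl, hrv.to_reflTransGen.trans hvu⟩, hrv⟩
  exact ⟨a, haS, hv, hpath, ⟨hrv.to_reflTransGen, hvu⟩, hav,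
    fun ⟨c, hcS, hcp, hac, hcv⟩ => hnearest c ⟨hcS, hcp, hcv⟩ hac⟩

end IsRootedTree

theorem Feasible.reachable_root {V : Type*} [Finite V] {parent : V → Option V} {r : V}
    {Es : V → V → Prop} {S : Set V} (htree : IsRootedTree parent r)
    (hS : Feasible parent Es r S) {v : V} (hv : v ∈ S) :
    ((shortcutGraph Es).induce S).Reachable ⟨r, hS.2.1⟩ ⟨v, hv⟩ := by
  induction v using htree.wellFounded_strictDescend.induction with
  | _ v ih =>
    obtain rfl | hrv := Relation.reflTransGen_iff_eq_or_transGen.mp (htree.2 v)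
    · rfl
    obtain ⟨u, hvu, hu⟩ := htree.exists_descend_isLeaf v
    obtain ⟨a, hcons⟩ := htree.exists_consecutive hS.2.1 hv hrv hvu
    have ⟨haS, _, _, _, hav, _⟩ := hcons
    have hadj : ((shortcutGraph Es).induce S).Adj ⟨a, haS⟩ ⟨v, hv⟩ :=
      ⟨htree.ne_of_strictDescend hav, .inl (hS.2.2.2 u (htree.2 u) hu a v hcons)⟩
    exact (ih a hav haS).trans hadj.reachable

theorem feasible_gives_ptbs_solution_general {V : Type*} [Fintype V]
    (parent : V → Option V) (r : V) (Es : V → V → Prop)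
    (htree : IsRootedTree parent r)
    (S : Set V) (hS : Feasible parent Es r S) :
    r ∈ S ∧ (∀ u, IsLeaf parent u → u ∈ S) ∧
      ((shortcutGraph Es).induce S).Connected :=
  ⟨hS.2.1, fun u hu => hS.2.2.1 u (htree.2 u) hu,
    (SimpleGraph.connected_iff_exists_forall_reachable _).2
      ⟨⟨r, hS.2.1⟩, fun v => hS.reachable_root htree v.2⟩⟩

/-- Every feasible simplification `S` of `Sub(r)` is a feasible solution of the graph
problem PTBS: `S` contains the root and every leaf of `T`, and the subgraph of the
shortcut graph induced on `S` is connected. -/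
theorem feasible_gives_ptbs_solution {V : Type*} [Fintype V] [DecidableEq V]
    (parent : V → Option V) (r : V) (Es : V → V → Prop)
    (htree : IsRootedTree parent r)
    (hEsDesc : ∀ a b, Es a b → StrictDescend parent a b)
    (hEsParent : ∀ w u, parent u = some w → Es w u)
    (S : Set V) (hS : Feasible parent Es r S) :
    r ∈ S ∧ (∀ u, IsLeaf parent u → u ∈ S) ∧
      ((shortcutGraph Es).induce S).Connected :=
  feasible_gives_ptbs_solution_general parent r Es htree S hS
end
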